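/- arXiv:1211.0327 — 2 statements merged into one kernel-verified Lean document; each statement's English description precedes it below -/
import Mathlib

section
/- For every real k ≥ 0, the Rutherford grazing-collision family b_ε satisfies the second grazing-collisions condition: lim_{ε → 0⁺} 2π ∫₀^π b_ε(cos θ) (1 − cos θ)^{2+k} sin θ dθ = lim_{ε → 0⁺} ∫_ε^π (16 ε / θ⁴)(1 − cos θ)^{2+k} dθ = 0. -/
/-!
Since `1 - cos θ ≤ θ² / 2`, the integrand `16 ε θ⁻⁴ (1 - cos θ)^(2+k)` is at most
`4 (π² / 2)^k ε` on `[ε, π]`: the singularity `θ⁻⁴` is absorbed by `(1 - cos θ)²`. Hence the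
integral is `O(ε)`. The integral against `b_ε` is the same integral, because `b_ε` vanishes on
`(0, ε)`.
-/

open Real Filter MeasureTheory Set

lemma one_sub_cos_le_sq_div_two (θ : ℝ) : 1 - cos θ ≤ θ ^ 2 / 2 := by
  linarith [one_sub_sq_div_two_le_cos (x := θ)]

lemma one_sub_cos_rpow_le {s : ℝ} (hs : 0 ≤ s) (θ : ℝ) :
    (1 - cos θ) ^ s ≤ (θ ^ 2 / 2) ^ s :=
  rpow_le_rpow (by linarith [cos_le_one θ]) (one_sub_cos_le_sq_div_two θ) hs

lemma rutherford_integrand_nonneg (k : ℝ) {ε : ℝ} (hε : 0 ≤ ε) (θ : ℝ) :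
    0 ≤ 16 * ε / θ ^ 4 * (1 - cos θ) ^ ((2 : ℝ) + k) := by
  have : 0 ≤ 1 - cos θ := by linarith [cos_le_one θ]
  positivity

lemma rutherford_integrand_le {k ε θ R : ℝ} (hk : 0 ≤ k) (hε : 0 ≤ ε) (hθ : θ ≠ 0)
    (hθR : |θ| ≤ R) :
    16 * ε / θ ^ 4 * (1 - cos θ) ^ ((2 : ℝ) + k) ≤ 4 * (R ^ 2 / 2) ^ k * ε := by
  have hsq : (θ ^ 2 / 2) ^ ((2 : ℝ) + k) = θ ^ 4 / 4 * (θ ^ 2 / 2) ^ k := by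
    rw [rpow_add (by positivity), rpow_two]
    ring
  have hθk : (θ ^ 2 / 2) ^ k ≤ (R ^ 2 / 2) ^ k := by
    refine rpow_le_rpow (by positivity) ?_ hk
    have := sq_le_sq' (abs_le.mp hθR).1 (abs_le.mp hθR).2
    linarith
  calc 16 * ε / θ ^ 4 * (1 - cos θ) ^ ((2 : ℝ) + k)
      ≤ 16 * ε / θ ^ 4 * (θ ^ 2 / 2) ^ ((2 : ℝ) + k) := by
        have := one_sub_cos_rpow_le (s := 2 + k) (by positivity) θ
        gcongr
    _ = 4 * ε * (θ ^ 2 / 2) ^ k := by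
        rw [hsq]
        field_simp
        ring
    _ ≤ 4 * ε * (R ^ 2 / 2) ^ k := by gcongr
    _ = 4 * (R ^ 2 / 2) ^ k * ε := by ring

lemma intervalIntegrable_rutherford_integrand (k : ℝ) (hk : 0 ≤ k) {ε b : ℝ} (hε : 0 < ε)
    (hεb : ε ≤ b) :
    IntervalIntegrable (fun θ => 16 * ε / θ ^ 4 * (1 - cos θ) ^ ((2 : ℝ) + k)) volume ε b := by
  refine ContinuousOn.intervalIntegrable ?_
  rw [uIcc_of_le hεb]
  refine ContinuousOn.mul ?_ (Continuous.continuousOn ?_)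
  · exact continuousOn_const.div (continuousOn_pow 4)
      fun θ hθ => pow_ne_zero 4 (hε.trans_le hθ.1).ne'
  · exact (continuous_const.sub continuous_cos).rpow_const fun _ => Or.inr (by positivity)

lemma integral_rutherford_le (k : ℝ) (hk : 0 ≤ k) {ε : ℝ} (hε : 0 < ε) (hεπ : ε ≤ π) :
    ∫ θ in ε..π, 16 * ε / θ ^ 4 * (1 - cos θ) ^ ((2 : ℝ) + k)
      ≤ 4 * (π ^ 2 / 2) ^ k * π * ε := by
  have hbound : ∀ θ ∈ Icc ε π,
      16 * ε / θ ^ 4 * (1 - cos θ) ^ ((2 : ℝ) + k) ≤ 4 * (π ^ 2 / 2) ^ k * ε := by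
    intro θ hθ
    have hθ0 : 0 < θ := hε.trans_le hθ.1
    exact rutherford_integrand_le hk hε.le hθ0.ne' (by rw [abs_of_pos hθ0]; exact hθ.2)
  calc ∫ θ in ε..π, 16 * ε / θ ^ 4 * (1 - cos θ) ^ ((2 : ℝ) + k)
      ≤ ∫ _ in ε..π, 4 * (π ^ 2 / 2) ^ k * ε :=
        intervalIntegral.integral_mono_on hεπ
          (intervalIntegrable_rutherford_integrand k hk hε hεπ) intervalIntegrable_const hbound
    _ = (π - ε) * (4 * (π ^ 2 / 2) ^ k * ε) := by
        rw [intervalIntegral.integral_const, smul_eq_mul]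
    _ ≤ 4 * (π ^ 2 / 2) ^ k * π * ε := by
        nlinarith [show 0 ≤ 4 * (π ^ 2 / 2) ^ k * ε by positivity]

lemma intervalIntegral_ite_le {a b ε : ℝ} (haε : a ≤ ε) (hεb : ε ≤ b) (g : ℝ → ℝ) :
    ∫ θ in a..b, (if ε ≤ θ then g θ else 0) = ∫ θ in ε..b, g θ := by
  have hind : (fun θ => if ε ≤ θ then g θ else 0) = (Ici ε).indicator g := by
    ext θ
    simp only [indicator_apply, mem_Ici]
  have hset : Ioc a b ∩ Ioi ε = Ioc ε b := by
    ext θ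
    simp only [mem_inter_iff, mem_Ioc, mem_Ioi]
    constructor
    · rintro ⟨⟨-, hθb⟩, hεθ⟩
      exact ⟨hεθ, hθb⟩
    · rintro ⟨hεθ, hθb⟩
      exact ⟨⟨haε.trans_lt hεθ, hθb⟩, hεθ⟩
  rw [hind, intervalIntegral.integral_of_le (haε.trans hεb),
    intervalIntegral.integral_of_le hεb, setIntegral_indicator measurableSet_Ici, ← hset]
  exact setIntegral_congr_set ((ae_eq_refl _).inter Ioi_ae_eq_Ici.symm)

lemma two_pi_mul_rutherford_kernel (ε θ : ℝ) :
    2 * π * (8 * ε / (π * θ ^ 4)) = 16 * ε / θ ^ 4 := by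
  rw [mul_div_assoc', mul_div_mul_comm, mul_div_cancel_right₀ _ pi_ne_zero]
  ring

lemma tendsto_integral_rutherford (k : ℝ) (hk : 0 ≤ k) :
    Tendsto (fun ε : ℝ => ∫ θ in ε..π, 16 * ε / θ ^ 4 * (1 - cos θ) ^ ((2 : ℝ) + k))
      (nhdsWithin 0 (Ioi 0)) (nhds 0) := by
  have hsmall : ∀ᶠ ε in nhdsWithin (0 : ℝ) (Ioi 0), ε ∈ Ioo 0 π := Ioo_mem_nhdsGT pi_pos
  have hlin : Tendsto (fun ε : ℝ => 4 * (π ^ 2 / 2) ^ k * π * ε) (nhdsWithin 0 (Ioi 0))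
      (nhds 0) :=
    tendsto_nhdsWithin_of_tendsto_nhds ((continuous_const_mul _).tendsto' 0 0 (mul_zero _))
  refine squeeze_zero' ?_ ?_ hlin
  · filter_upwards [hsmall] with ε hε
    exact intervalIntegral.integral_nonneg hε.2.le fun θ _ =>
      rutherford_integrand_nonneg k hε.1.le θ
  · filter_upwards [hsmall] with ε hε
    exact integral_rutherford_le k hk hε.1 hε.2.le

/-- The Rutherford grazing-collision family satisfies the second
grazing-collisions condition: higher moments vanish in the limit. -/
theorem rutherford_second_grazing_condition
    (w : ℝ → ℝ → ℝ)
    (hw : ∀ ε θ : ℝ, w ε θ = if ε ≤ θ then 8 * ε / (Real.pi * θ ^ 4) else 0)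
    (k : ℝ) (hk : 0 ≤ k) :
    Filter.Tendsto
        (fun ε : ℝ => ∫ θ in (0:ℝ)..Real.pi,
          2 * Real.pi * w ε θ * (1 - Real.cos θ) ^ ((2 : ℝ) + k))
        (nhdsWithin 0 (Set.Ioi 0)) (nhds 0) ∧
      Filter.Tendsto
        (fun ε : ℝ => ∫ θ in ε..Real.pi, 16 * ε / θ ^ 4 * (1 - Real.cos θ) ^ ((2 : ℝ) + k))
        (nhdsWithin 0 (Set.Ioi 0)) (nhds 0) := by
  have hb_eq : ∀ ε θ : ℝ, 2 * π * w ε θ * (1 - cos θ) ^ ((2 : ℝ) + k)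
      = if ε ≤ θ then 16 * ε / θ ^ 4 * (1 - cos θ) ^ ((2 : ℝ) + k) else 0 := by
    intro ε θ
    rw [hw]
    split_ifs
    · rw [two_pi_mul_rutherford_kernel]
    · ring
  refine ⟨(tendsto_integral_rutherford k hk).congr' ?_, tendsto_integral_rutherford k hk⟩
  filter_upwards [Ioo_mem_nhdsGT pi_pos] with ε hε
  simp only [hb_eq, intervalIntegral_ite_le hε.1.le hε.2.le]
end

section
/- The Rutherford grazing-collision family concentrates at θ = 0 as a delta family: for every continuous function g : [0, π] → ℝ, lim_{ε → 0⁺} ∫₀^π 2π b_ε(cos θ) sin θ (1 − cos θ) g(θ) dθ = lim_{ε → 0⁺} ∫_ε^π (16 ε / θ⁴)(1 − cos θ) g(θ) dθ = 8 g(0); that is, 2π sin θ (1 − cos θ) b_ε(cos θ) converges weakly to Λ₀ δ_{θ=0} with Λ₀ = 8. -/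
/-!
Since `1 - cos θ = (θ² / 2) sinc² (θ / 2)`, the cut-off integrand is `ε H(θ) / θ²` with
`H θ = 8 sinc² (θ / 2) g θ` continuous on `[0, π]` and `H 0 = 8 g 0`. The kernel `ε / θ²` on
`[ε, a]` is an approximate identity: substituting `θ = ε t` turns `ε ∫_ε^a H(θ) / θ² dθ` into
`∫_1^{a/ε} H(ε t) / t² dt`, which tends to `H 0 ∫_1^∞ dt / t² = H 0` by dominated convergence
with the bound `sup |H| / t²`. The first integral agrees with the cut-off one because
`2π b_ε(cos θ) sin θ = 16 ε / θ⁴` on `[ε, π]` and vanishes below `ε`.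
-/

open Real Filter Set MeasureTheory Topology

lemma one_sub_cos_eq_mul_sinc_sq (θ : ℝ) : 1 - cos θ = θ ^ 2 / 2 * sinc (θ / 2) ^ 2 := by
  rcases eq_or_ne θ 0 with rfl | hθ
  · simp
  have hcos : cos θ = 1 - 2 * sin (θ / 2) ^ 2 := by
    have h2 := cos_two_mul (θ / 2)
    rw [mul_div_cancel₀ θ two_ne_zero] at h2
    linear_combination h2 + 2 * sin_sq_add_cos_sq (θ / 2)
  rw [sinc_of_ne_zero (div_ne_zero hθ two_ne_zero), hcos]
  field_simp
  ring

lemma div_sq_eq_mul_rpow_neg_two (c : ℝ) {t : ℝ} (ht : 0 ≤ t) : c / t ^ 2 = c * t ^ (-2 : ℝ) := by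
  rw [rpow_neg ht, rpow_two, div_eq_mul_inv]

lemma integrableOn_Ioi_one_div_sq (c : ℝ) : IntegrableOn (fun t : ℝ => c / t ^ 2) (Ioi 1) :=
  IntegrableOn.congr_fun ((integrableOn_Ioi_rpow_of_lt (a := -2) (by norm_num) one_pos).const_mul c)
    (fun _ ht => (div_sq_eq_mul_rpow_neg_two c (zero_le_one.trans ht.le)).symm)
    measurableSet_Ioi

lemma integral_Ioi_one_div_sq (c : ℝ) : ∫ t in Ioi (1 : ℝ), c / t ^ 2 = c := by
  rw [setIntegral_congr_fun measurableSet_Ioi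
      (fun _ ht => div_sq_eq_mul_rpow_neg_two c (zero_le_one.trans ht.le)),
    integral_const_mul, integral_Ioi_rpow_of_lt (a := -2) (by norm_num) one_pos]
  norm_num

lemma intervalIntegral_indicator_Ici {f : ℝ → ℝ} {a b c : ℝ} (hab : a < b) (hbc : b ≤ c) :
    ∫ x in a..c, (Ici b).indicator f x = ∫ x in b..c, f x := by
  rw [intervalIntegral.integral_of_le (hab.le.trans hbc), intervalIntegral.integral_of_le hbc,
    integral_indicator measurableSet_Ici, Measure.restrict_restrict measurableSet_Ici,
    ← integral_Icc_eq_integral_Ioc]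
  congr 2
  ext x
  simp only [mem_inter_iff, mem_Ici, mem_Ioc, mem_Icc]
  constructor
  · rintro ⟨hbx, -, hxc⟩; exact ⟨hbx, hxc⟩
  · rintro ⟨hbx, hxc⟩; exact ⟨hbx, hab.trans_le hbx, hxc⟩

lemma mul_intervalIntegral_div_sq_eq (h : ℝ → ℝ) {ε : ℝ} (a : ℝ) (hε : ε ≠ 0) :
    ε * ∫ θ in ε..a, h θ / θ ^ 2 = ∫ t in 1..a / ε, h (ε * t) / t ^ 2 := by
  have hscale (t : ℝ) : h (ε * t) / t ^ 2 = ε ^ 2 * (h (ε * t) / (ε * t) ^ 2) := by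
    rw [mul_pow, mul_div_assoc', mul_div_mul_left _ _ (pow_ne_zero 2 hε)]
  simp_rw [hscale, intervalIntegral.integral_const_mul,
    intervalIntegral.integral_comp_mul_left (fun θ => h θ / θ ^ 2) hε, mul_one,
    mul_div_cancel₀ a hε, smul_eq_mul]
  field_simp

section DeltaFamily

variable {h : ℝ → ℝ} {a : ℝ}

lemma tendsto_setIntegral_Ioc_comp_mul_div_sq (ha : 0 < a) (hh : ContinuousOn h (Icc 0 a)) :
    Tendsto (fun ε => ∫ t in Ioc 1 (a / ε), h (ε * t) / t ^ 2) (𝓝[>] 0) (𝓝 (h 0)) := by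
  obtain ⟨M, hM⟩ := isCompact_Icc.exists_bound_of_continuousOn hh
  have hmapsTo {ε : ℝ} (hε : 0 < ε) : MapsTo (ε * ·) (Ioc 1 (a / ε)) (Icc 0 a) := fun t ht =>
    ⟨by nlinarith [ht.1], by linarith [(le_div_iff₀ hε).mp ht.2]⟩
  have hindicator (ε : ℝ) : ∫ t in Ioc 1 (a / ε), h (ε * t) / t ^ 2 =
      ∫ t in Ioi 1, (Iic (a / ε)).indicator (fun t => h (ε * t) / t ^ 2) t := by
    rw [integral_indicator measurableSet_Iic, Measure.restrict_restrict measurableSet_Iic,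
      Iic_inter_Ioi]
  simp_rw [hindicator]
  rw [← integral_Ioi_one_div_sq (h 0)]
  refine tendsto_integral_filter_of_dominated_convergence (fun t => M / t ^ 2) ?_ ?_
    (integrableOn_Ioi_one_div_sq M) ?_
  · filter_upwards [self_mem_nhdsWithin] with ε (hε : 0 < ε)
    rw [aestronglyMeasurable_indicator_iff measurableSet_Iic,
      Measure.restrict_restrict measurableSet_Iic, Iic_inter_Ioi]
    refine ContinuousOn.aestronglyMeasurable ?_ measurableSet_Ioc
    exact (hh.comp (continuousOn_const.mul continuousOn_id) (hmapsTo hε)).div (by fun_prop)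
      fun t ht => pow_ne_zero 2 (zero_lt_one.trans ht.1).ne'
  · filter_upwards [self_mem_nhdsWithin] with ε (hε : 0 < ε)
    filter_upwards [ae_restrict_mem measurableSet_Ioi] with t (ht : 1 < t)
    by_cases hta : t ∈ Iic (a / ε)
    · rw [indicator_of_mem hta, norm_div, norm_pow, norm_of_nonneg (zero_le_one.trans ht.le)]
      exact div_le_div_of_nonneg_right (hM _ (hmapsTo hε ⟨ht, hta⟩)) (by positivity)
    · rw [indicator_of_notMem hta, norm_zero]
      exact div_nonneg ((norm_nonneg _).trans (hM 0 ⟨le_rfl, ha.le⟩)) (by positivity)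
  · filter_upwards [ae_restrict_mem measurableSet_Ioi] with t (ht : 1 < t)
    have ht0 : 0 < t := zero_lt_one.trans ht
    have hsmall : Ioo 0 (a / t) ∈ 𝓝[>] (0 : ℝ) := Ioo_mem_nhdsGT (by positivity)
    have hscaled : Tendsto (fun ε => ε * t) (𝓝[>] 0) (𝓝[Icc 0 a] 0) := by
      refine tendsto_nhdsWithin_of_tendsto_nhds_of_eventually_within _ ?_ ?_
      · simpa using (continuous_mul_const t).tendsto (0 : ℝ) |>.mono_left nhdsWithin_le_nhds
      · filter_upwards [hsmall] with ε hε
        exact ⟨by nlinarith [hε.1], (lt_div_iff₀ ht0).mp hε.2 |>.le⟩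
    refine (((hh 0 ⟨le_rfl, ha.le⟩).tendsto.comp hscaled).div_const (t ^ 2)).congr' ?_
    filter_upwards [hsmall] with ε hε
    have hmem : t ∈ Iic (a / ε) :=
      (le_div_iff₀ hε.1).mpr (by linarith [(lt_div_iff₀ ht0).mp hε.2])
    rw [indicator_of_mem hmem]
    rfl

theorem tendsto_mul_intervalIntegral_div_sq (ha : 0 < a) (hh : ContinuousOn h (Icc 0 a)) :
    Tendsto (fun ε => ε * ∫ θ in ε..a, h θ / θ ^ 2) (𝓝[>] 0) (𝓝 (h 0)) := by
  refine (tendsto_setIntegral_Ioc_comp_mul_div_sq ha hh).congr' ?_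
  filter_upwards [Ioo_mem_nhdsGT ha] with ε hε
  rw [mul_intervalIntegral_div_sq_eq h a hε.1.ne',
    intervalIntegral.integral_of_le ((one_le_div₀ hε.1).mpr hε.2.le)]

end DeltaFamily

lemma rutherford_kernel_eq (g : ℝ → ℝ) (ε θ : ℝ) :
    16 * ε / θ ^ 4 * (1 - cos θ) * g θ = ε * (8 * sinc (θ / 2) ^ 2 * g θ / θ ^ 2) := by
  rw [one_sub_cos_eq_mul_sinc_sq]
  rcases eq_or_ne θ 0 with rfl | hθ
  · simp
  field_simp
  ring

lemma rutherford_integrand_eq_indicator {w : ℝ → ℝ → ℝ}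
    (hw : ∀ ε θ : ℝ, w ε θ = if ε ≤ θ then 8 * ε / (π * θ ^ 4) else 0) (g : ℝ → ℝ) (ε θ : ℝ) :
    2 * π * w ε θ * (1 - cos θ) * g θ =
      (Ici ε).indicator (fun θ => 16 * ε / θ ^ 4 * (1 - cos θ) * g θ) θ := by
  by_cases hθ : ε ≤ θ
  · rw [hw, if_pos hθ, indicator_of_mem (mem_Ici.mpr hθ)]
    field_simp
    ring
  · rw [hw, if_neg hθ, indicator_of_notMem (notMem_Ici.mpr (not_le.mp hθ))]
    ring

/-- The Rutherford grazing-collision family concentrates at `θ = 0`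
as a delta family with weight `Λ₀ = 8`. -/
theorem rutherford_delta_family
    (w : ℝ → ℝ → ℝ)
    (hw : ∀ ε θ : ℝ, w ε θ = if ε ≤ θ then 8 * ε / (Real.pi * θ ^ 4) else 0)
    (g : ℝ → ℝ) (hg : ContinuousOn g (Set.Icc 0 Real.pi)) :
    Filter.Tendsto
        (fun ε : ℝ => ∫ θ in (0:ℝ)..Real.pi, 2 * Real.pi * w ε θ * (1 - Real.cos θ) * g θ)
        (nhdsWithin 0 (Set.Ioi 0)) (nhds (8 * g 0)) ∧
      Filter.Tendsto
        (fun ε : ℝ => ∫ θ in ε..Real.pi, 16 * ε / θ ^ 4 * (1 - Real.cos θ) * g θ)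
        (nhdsWithin 0 (Set.Ioi 0)) (nhds (8 * g 0)) := by
  have hcont : ContinuousOn (fun θ => 8 * sinc (θ / 2) ^ 2 * g θ) (Icc 0 π) :=
    (by fun_prop : Continuous fun θ => 8 * sinc (θ / 2) ^ 2).continuousOn.mul hg
  have hcutoff : Tendsto (fun ε => ∫ θ in ε..π, 16 * ε / θ ^ 4 * (1 - cos θ) * g θ)
      (𝓝[>] 0) (𝓝 (8 * g 0)) := by
    convert tendsto_mul_intervalIntegral_div_sq pi_pos hcont using 2 with ε
    · simp_rw [← intervalIntegral.integral_const_mul, rutherford_kernel_eq]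
    · simp
  refine ⟨hcutoff.congr' ?_, hcutoff⟩
  filter_upwards [Ioo_mem_nhdsGT pi_pos] with ε hε
  simp_rw [rutherford_integrand_eq_indicator hw g, intervalIntegral_indicator_Ici hε.1 hε.2.le]
end
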